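/- arXiv:2603.07104 — 2 statements merged into one kernel-verified Lean document; each statement's English description precedes it below -/
import Mathlib

section
/- For any real number θ > 0 and integers m ≥ 2 and 1 ≤ j ≤ m−1, one has ∑_{n=j}^{m} (−1)^{n−j} (θ + 2n − 1)/(n−j)! · (θ+j)^{(n−1)} = (−1)^{m−j} (θ+j)^{(m)}/(m−j)!, where w^{(k)} := w(w+1)⋯(w+k−1) denotes the rising factorial (with w^{(0)} := 1). -/
open MeasureTheory ProbabilityTheory Filter
open scoped ENNReal Classical

noncomputable section

variable {X : Type*} [MeasurableSpace X]

/-- The measure `μ^[n]` on `X^n`, defined recursively by adding Dirac masses. -/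
def seqM (μ : Measure X) : (n : ℕ) → Measure (Fin n → X)
  | 0 => Measure.dirac (fun i => i.elim0)
  | n + 1 => (seqM μ n).bind
      (fun x => (μ + ∑ i, Measure.dirac (x i)).map (Fin.snoc x))

/-- The rising factorial `w^{(n)} = w (w+1) ⋯ (w+n-1)`. -/
def risingFac (w : ℝ) (n : ℕ) : ℝ := ∏ i ∈ Finset.range n, (w + i)

/-- The Dirichlet distribution, realized as the law of normalized independent
Gamma random variables (with the convention `Gamma(0) = δ₀`). -/
def dirichletLaw {k : ℕ} (α : Fin k → ℝ) : Measure (Fin k → ℝ) :=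
  (Measure.pi (fun i => if 0 < α i then gammaMeasure (α i) 1 else Measure.dirac 0)).map
    (fun y i => y i / ∑ j, y j)

/-- `Q` is the law of a Dirichlet–Ferguson process with parameter measure `ρ`. -/
def IsDFLaw (ρ : Measure X) (Q : Measure (Measure X)) : Prop :=
  IsProbabilityMeasure Q ∧ (∀ᵐ μ ∂Q, IsProbabilityMeasure μ) ∧
    ∀ (k : ℕ) (B : Fin k → Set X), (∀ i, MeasurableSet (B i)) →
      Pairwise (Function.onFun Disjoint B) → (⋃ i, B i) = Set.univ →
      Q.map (fun μ i => (μ (B i)).toReal) = dirichletLaw (fun i => (ρ (B i)).toReal)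

/-- `ζ` is a Dirichlet–Ferguson process with parameter measure `ρ` on `(Ω, P)`. -/
def IsDF {Ω : Type*} [MeasurableSpace Ω] (ρ : Measure X) (P : Measure Ω)
    (ζ : Ω → Measure X) : Prop :=
  Measurable ζ ∧ IsDFLaw ρ (P.map ζ)

/-- The Campbell measure of the random measure `ζ`. -/
def campbell {Ω : Type*} [MeasurableSpace Ω] (P : Measure Ω) (ζ : Ω → Measure X) :
    Measure (Ω × X) :=
  P.bind (fun ω => (ζ ω).map (fun x => (ω, x)))

/-- The space `H_n` of symmetric, conditionally centered functions in `L²(ρ^[n])`. -/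
def memH (ρ : Measure X) : (n : ℕ) → ((Fin n → X) → ℝ) → Prop
  | 0, g => MemLp g 2 (seqM ρ 0)
  | n + 1, g => MemLp g 2 (seqM ρ (n + 1)) ∧
      (∀ π : Equiv.Perm (Fin (n + 1)),
        (fun x => g (x ∘ π)) =ᵐ[seqM ρ (n + 1)] g) ∧
      ∀ᵐ x ∂ seqM ρ n,
        ∫ t, g (Fin.snoc x t) ∂(ρ + ∑ i, Measure.dirac (x i)) = 0

/-- The multiple integral `ζⁿ(f)(ω) = ∫ f d(ζ ω)ⁿ`. -/
def chaosI {Ω : Type*} [MeasurableSpace Ω] (ζ : Ω → Measure X) (n : ℕ)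
    (f : (Fin n → X) → ℝ) (ω : Ω) : ℝ :=
  ∫ z, f z ∂ Measure.pi (fun _ : Fin n => ζ ω)

/-- The total mass `θ = ρ(X)` as a real number. -/
def θr (ρ : Measure X) : ℝ := (ρ Set.univ).toReal

/-- `(θ+n-1) n n!/θ^{(2n)}` at chaos level `n+1`. -/
def gradDomCoeff (ρ : Measure X) (n : ℕ) : ℝ :=
  (θr ρ + n) * ((n : ℝ) + 1) * (Nat.factorial (n + 1) : ℝ) /
    risingFac (θr ρ) (2 * (n + 1))

/-- `F ∈ dom(∇)`, expressed in terms of its chaos kernels `f`. -/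
def InDomGrad (ρ : Measure X) (f : (n : ℕ) → (Fin (n + 1) → X) → ℝ) : Prop :=
  Summable fun n => gradDomCoeff ρ n * ∫ z, (f n z) ^ 2 ∂ seqM ρ (n + 1)

/-- Partial sums of the Malliavin gradient series. -/
def gradPartial {Ω : Type*} [MeasurableSpace Ω] (ζ : Ω → Measure X)
    (f : (n : ℕ) → (Fin (n + 1) → X) → ℝ) (N : ℕ) (p : Ω × X) : ℝ :=
  ∑ n ∈ Finset.range N, ((n : ℝ) + 1) *
    ((∫ y, f n (Fin.cons p.2 y) ∂ Measure.pi (fun _ : Fin n => ζ p.1)) -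
      chaosI ζ (n + 1) (f n) p.1)

/-- `G` is the Malliavin gradient of the functional with chaos kernels `f`:
the gradient series converges to `G` in `L²(C_ζ)`. -/
def HasGradient {Ω : Type*} [MeasurableSpace Ω] (P : Measure Ω) (ζ : Ω → Measure X)
    (f : (n : ℕ) → (Fin (n + 1) → X) → ℝ) (G : Ω × X → ℝ) : Prop :=
  Tendsto (fun N => eLpNorm (fun p => G p - gradPartial ζ f N p) 2 (campbell P ζ))
    atTop (nhds 0)

/-- `F = c₀ + ∑_{n≥1} ζⁿ(fₙ)` with convergence in `L²(P)`. -/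
def IsChaosExp {Ω : Type*} [MeasurableSpace Ω] (P : Measure Ω) (ζ : Ω → Measure X)
    (c₀ : ℝ) (f : (n : ℕ) → (Fin (n + 1) → X) → ℝ) (F : Ω → ℝ) : Prop :=
  Tendsto (fun N => eLpNorm
    (fun ω => F ω - c₀ - ∑ n ∈ Finset.range N, chaosI ζ (n + 1) (f n) ω) 2 P)
    atTop (nhds 0)

/-- `F ∈ dom(L)`, expressed in terms of its chaos kernels `f`. -/
def InDomL (ρ : Measure X) (f : (n : ℕ) → (Fin (n + 1) → X) → ℝ) : Prop :=
  Summable fun n : ℕ => ((θr ρ + (n : ℝ)) ^ 2 * ((n : ℝ) + 1) ^ 2 * (Nat.factorial (n + 1) : ℝ) /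
      risingFac (θr ρ) (2 * (n + 1))) * ∫ z, (f n z) ^ 2 ∂ seqM ρ (n + 1)

end
theorem risingFac_succ (w : ℝ) (n : ℕ) : risingFac w (n + 1) = risingFac w n * (w + n) :=
  Finset.prod_range_succ _ _

/-- Since `(w + p + 2k) w^{(p+k)} = w^{(p+k+1)} + k w^{(p+k)}`, the `k`-th summand is
`a k - a (k - 1)` with `a k = (-1)^k w^{(p+k+1)} / k!`, so the sum telescopes. -/
theorem sum_range_neg_one_pow_mul_risingFac (w : ℝ) (p d : ℕ) :
    ∑ k ∈ Finset.range (d + 1),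
        (-1 : ℝ) ^ k * ((w + p + 2 * (k : ℝ)) / (Nat.factorial k : ℝ)) * risingFac w (p + k)
      = (-1 : ℝ) ^ d * risingFac w (p + d + 1) / (Nat.factorial d : ℝ) := by
  induction d with
  | zero =>
    simp only [zero_add, Finset.sum_range_one, pow_zero, Nat.factorial_zero, Nat.cast_one,
      Nat.cast_zero, add_zero, mul_zero, div_one, one_mul, risingFac_succ]
    ring
  | succ d ih =>
    rw [Finset.sum_range_succ, ih, ← add_assoc, risingFac_succ w (p + d + 1),
      Nat.factorial_succ, pow_succ]
    have hd : (Nat.factorial d : ℝ) ≠ 0 := by positivity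
    push_cast
    field_simp
    ring

theorem statement0_general (θ : ℝ) (m j : ℕ) (hj : 1 ≤ j)
    (hjm : j ≤ m - 1) :
    ∑ n ∈ Finset.Icc j m,
        (-1 : ℝ) ^ (n - j) * ((θ + 2 * (n : ℝ) - 1) / (Nat.factorial (n - j) : ℝ)) *
          risingFac (θ + (j : ℝ)) (n - 1)
      = (-1 : ℝ) ^ (m - j) * risingFac (θ + (j : ℝ)) m / (Nat.factorial (m - j) : ℝ) := by
  obtain ⟨p, rfl⟩ : ∃ p, j = p + 1 := ⟨j - 1, by omega⟩
  obtain ⟨d, rfl⟩ : ∃ d, m = p + 1 + d := ⟨m - (p + 1), by omega⟩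
  rw [← Finset.Ico_add_one_right_eq_Icc, Finset.sum_Ico_eq_sum_range,
    show p + 1 + d + 1 - (p + 1) = d + 1 by omega, Nat.add_sub_cancel_left, add_right_comm p 1 d]
  convert sum_range_neg_one_pow_mul_risingFac (θ + (p + 1 : ℕ)) p d using 2 with k
  rw [Nat.add_sub_cancel_left, add_right_comm p 1 k, Nat.add_sub_cancel]
  push_cast
  ring

theorem statement0 (θ : ℝ) (hθ : 0 < θ) (m j : ℕ) (hm : 2 ≤ m) (hj : 1 ≤ j)
    (hjm : j ≤ m - 1) :
    ∑ n ∈ Finset.Icc j m,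
        (-1 : ℝ) ^ (n - j) * ((θ + 2 * (n : ℝ) - 1) / (Nat.factorial (n - j) : ℝ)) *
          risingFac (θ + (j : ℝ)) (n - 1)
      = (-1 : ℝ) ^ (m - j) * risingFac (θ + (j : ℝ)) m / (Nat.factorial (m - j) : ℝ) :=
  statement0_general θ m j hj hjm
end

section
/- Let μ be a finite measure on a measurable space X, and for n ∈ ℕ define the measure μ^[n] on X^n by μ^[n](B) = ∫⋯∫ 1_B(x₁,…,xₙ) (μ+δ_{x₁}+⋯+δ_{x_{n−1}})(dxₙ) ⋯ (μ+δ_{x₁})(dx₂) μ(dx₁). Then for every measurable set B ⊆ X, μ^[n](Bⁿ) = μ(B)(μ(B)+1)⋯(μ(B)+n−1), i.e., the n-th rising factorial of μ(B). -/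
open MeasureTheory ProbabilityTheory Filter
open scoped ENNReal Classical

/-! Induction on `n`. An extension `(x, t)` of `x` lies in `Bⁿ⁺¹` iff `x ∈ Bⁿ` and `t ∈ B`, and
for `x ∈ Bⁿ` all Dirac masses of `μ + δ_{x₁} + ⋯ + δ_{xₙ}` sit in `B`, which therefore has mass
`μ B + n`. So passing from `μ^[n](Bⁿ)` to `μ^[n+1](Bⁿ⁺¹)` multiplies by `μ B + n`. -/

section

variable {X : Type*} [MeasurableSpace X]

theorem measurable_snoc_uncurry (n : ℕ) :
    Measurable fun p : (Fin n → X) × X => (Fin.snoc p.1 p.2 : Fin (n + 1) → X) := by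
  refine measurable_pi_lambda _ fun i => ?_
  induction i using Fin.lastCases with
  | last => simpa using measurable_snd
  | cast i => simpa using measurable_fst.eval

theorem measurableSet_setOf_forall_mem {ι : Type*} [Countable ι] {B : Set X}
    (hB : MeasurableSet B) : MeasurableSet {x : ι → X | ∀ i, x i ∈ B} := by
  rw [Set.ofPred_forall]
  exact .iInter fun i => measurable_pi_apply i hB

theorem measurable_map_snoc_add_sum_dirac (μ : Measure X) [SFinite μ] (n : ℕ) :
    Measurable fun x : Fin n → X =>
      (μ + ∑ i, Measure.dirac (x i)).map (Fin.snoc (α := fun _ => X) x) := by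
  have hsnoc := measurable_snoc_uncurry (X := X) n
  -- The `μ`-part depends on `x` only through `μ.map (Prod.mk x)`, which is where `SFinite` enters.
  have hsplit : ∀ x : Fin n → X,
      (μ + ∑ i, Measure.dirac (x i)).map (Fin.snoc (α := fun _ => X) x) =
        (μ.map (Prod.mk x)).map (fun p => Fin.snoc p.1 p.2) +
          ∑ i, Measure.dirac (Fin.snoc x (x i) : Fin (n + 1) → X) := by
    intro x
    have hx : Measurable (Fin.snoc (α := fun _ => X) x) := hsnoc.comp measurable_prodMk_left
    rw [Measure.map_add _ _ hx, Measure.map_map hsnoc measurable_prodMk_left,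
      Measure.map_finset_sum hx.aemeasurable]
    simp only [Measure.map_dirac' hx]
    rfl
  simp_rw [hsplit]
  exact ((Measure.measurable_map _ hsnoc).comp Measurable.map_prodMk_left).add
    (Finset.measurable_sum _ fun i _ =>
      Measure.measurable_dirac.comp (hsnoc.comp (measurable_id.prodMk (measurable_pi_apply i))))

theorem seqM_succ_apply (μ : Measure X) [SFinite μ] (n : ℕ) {s : Set (Fin (n + 1) → X)}
    (hs : MeasurableSet s) :
    seqM μ (n + 1) s =
      ∫⁻ x, (μ + ∑ i, Measure.dirac (x i)) (Fin.snoc (α := fun _ => X) x ⁻¹' s) ∂seqM μ n := by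
  rw [seqM, Measure.bind_apply hs (measurable_map_snoc_add_sum_dirac μ n).aemeasurable]
  refine lintegral_congr fun x => Measure.map_apply ?_ hs
  exact (measurable_snoc_uncurry n).comp measurable_prodMk_left

theorem add_sum_dirac_preimage_snoc_setOf_forall_mem (μ : Measure X) {n : ℕ}
    (x : Fin n → X) (B : Set X) :
    (μ + ∑ i, Measure.dirac (x i)) (Fin.snoc (α := fun _ => X) x ⁻¹' {y | ∀ i, y i ∈ B}) =
      {x : Fin n → X | ∀ i, x i ∈ B}.indicator (fun _ => μ B + n) x := by
  have hpre : Fin.snoc (α := fun _ => X) x ⁻¹' {y : Fin (n + 1) → X | ∀ i, y i ∈ B} =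
      {t | (∀ i, x i ∈ B) ∧ t ∈ B} := by
    ext t
    simp [Fin.forall_fin_succ']
  by_cases hx : ∀ i, x i ∈ B
  · simp [hpre, hx, Measure.dirac_apply_of_mem]
  · simp [hpre, hx]

end

theorem statement1 {X : Type*} [MeasurableSpace X] (μ : MeasureTheory.Measure X)
    [MeasureTheory.IsFiniteMeasure μ] (n : ℕ) (B : Set X) (hB : MeasurableSet B) :
    seqM μ n {x | ∀ i, x i ∈ B} = ∏ i ∈ Finset.range n, (μ B + i) := by
  induction n with
  | zero => simp [seqM]
  | succ n ih =>
    rw [seqM_succ_apply μ n (measurableSet_setOf_forall_mem hB), Finset.prod_range_succ, ← ih]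
    simp_rw [add_sum_dirac_preimage_snoc_setOf_forall_mem]
    rw [lintegral_indicator_const (measurableSet_setOf_forall_mem hB), mul_comm]
end
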